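/- Let d > 0, m, m', ν, ν' ∈ ℝ. If h belongs to the anisotropic symbol class S^{m,ν}_{1,0} and h' belongs to S^{m',ν'}_{1,0}, then the pointwise product h·h' belongs to S^{m'',ν''}_{1,0}, where m'' = m + m' and ν'' = min{ν, ν', ν + ν'}. -/

import Mathlib

/-- Iterated directional derivative: `dLine [v₁, …, v_k] f = ∂_{v₁} ⋯ ∂_{v_k} f`. -/
noncomputable def dLine {E F : Type*} [NormedAddCommGroup E] [NormedSpace ℝ E]
    [NormedAddCommGroup F] [NormedSpace ℝ F] :
    List E → (E → F) → (E → F)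
  | [], f => f
  | v :: L, f => fun x => fderiv ℝ (dLine L f) x v

/-- `⟨ξ⟩ = (1 + |ξ|²)^{1/2}`. -/
noncomputable def jap {n : ℕ} (ξ : EuclideanSpace ℝ (Fin n)) : ℝ :=
  (1 + ‖ξ‖ ^ 2) ^ ((1 : ℝ) / 2)

/-- `{ξ,τ} = (⟨ξ⟩^{2d} + τ²)^{1/(2d)}`. -/
noncomputable def kap {n : ℕ} (d : ℝ) (ξ : EuclideanSpace ℝ (Fin n)) (τ : ℝ) : ℝ :=
  (jap ξ ^ (2 * d) + τ ^ 2) ^ (1 / (2 * d))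

/-- The anisotropic symbol class `S^{m,ν}_{1,0}` (order `m`, regularity number `ν`,
anisotropy `d`): a smooth function `h(x,ξ,τ)` such that for every multi-index of
`x`-derivatives (encoded as a list `B` of coordinate directions), every multi-index of
`ξ`-derivatives (encoded as a list `A`, with `|α| = A.length`) and every number `j` of
`τ`-derivatives, `|∂_x^β ∂_ξ^α ∂_τ^j h| ≤ C (⟨ξ⟩^{ν-|α|} + {ξ,τ}^{ν-|α|}) {ξ,τ}^{m-ν-dj}`. -/
def IsAnisoSymbol (n : ℕ) (d m ν : ℝ)
    (h : EuclideanSpace ℝ (Fin n) × EuclideanSpace ℝ (Fin n) × ℝ → ℂ) : Prop :=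
  ContDiff ℝ (⊤ : ℕ∞) h ∧
    ∀ (B A : List (Fin n)) (j : ℕ), ∃ C : ℝ, ∀ (x ξ : EuclideanSpace ℝ (Fin n)) (τ : ℝ),
      ‖dLine
          (B.map (fun i => ((EuclideanSpace.single i 1 : EuclideanSpace ℝ (Fin n)),
              (0 : EuclideanSpace ℝ (Fin n)), (0 : ℝ)))
            ++ A.map (fun i => ((0 : EuclideanSpace ℝ (Fin n)),
              (EuclideanSpace.single i 1 : EuclideanSpace ℝ (Fin n)), (0 : ℝ)))
            ++ List.replicate j ((0 : EuclideanSpace ℝ (Fin n)),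
              (0 : EuclideanSpace ℝ (Fin n)), (1 : ℝ)))
          h (x, ξ, τ)‖
        ≤ C * ((jap ξ ^ (ν - (A.length : ℝ)) + kap d ξ τ ^ (ν - (A.length : ℝ)))
            * kap d ξ τ ^ (m - ν - d * (j : ℝ)))

/-!
By the Leibniz rule, a derivative `∂_x^β ∂_ξ^α ∂_τ^j (h h')` is a finite sum of products
`∂_x^{β₁} ∂_ξ^{α₁} ∂_τ^{j₁} h · ∂_x^{β₂} ∂_ξ^{α₂} ∂_τ^{j₂} h'`, one for each way of distributing
the differentiations between the two factors. Each product is bounded by the product of the two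
symbol weights. With `J = ⟨ξ⟩ ≤ K = {ξ,τ}`, the elementary inequality
`(J^s₁ + K^s₁)(J^s₂ + K^s₂) ≤ 4 (J^b + K^b) K^(s₁+s₂-b)` for `b ≤ s₁, s₂, s₁ + s₂`, applied with
`s₁ = ν - |α₁|`, `s₂ = ν' - |α₂|`, `b = ν'' - |α|`, turns this into the weight of order `m + m'`
and regularity `ν'' = min{ν, ν', ν + ν'}`: the surplus `ν + ν' - ν''` is absorbed by `K`.
-/

namespace List

variable {α β : Type*}

def splits : List α → List (List α × List α)
  | [] => [([], [])]
  | v :: L => (splits L).flatMap fun p => [(v :: p.1, p.2), (p.1, v :: p.2)]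

theorem mem_splits_cons {v : α} {L : List α} {p : List α × List α} :
    p ∈ splits (v :: L) ↔ ∃ q ∈ splits L, p = (v :: q.1, q.2) ∨ p = (q.1, v :: q.2) := by
  simp [splits]

theorem length_add_length_of_mem_splits {L : List α} {p : List α × List α}
    (hp : p ∈ splits L) : p.1.length + p.2.length = L.length := by
  induction L generalizing p with
  | nil => simp_all [splits]
  | cons v L ih =>
    obtain ⟨q, hq, rfl | rfl⟩ := mem_splits_cons.1 hp <;> simp [← ih hq] <;> omega

theorem exists_of_mem_splits_append {L₁ L₂ : List α} {p : List α × List α}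
    (hp : p ∈ splits (L₁ ++ L₂)) :
    ∃ q₁ ∈ splits L₁, ∃ q₂ ∈ splits L₂, p = (q₁.1 ++ q₂.1, q₁.2 ++ q₂.2) := by
  induction L₁ generalizing p with
  | nil => exact ⟨([], []), by simp [splits], p, hp, rfl⟩
  | cons v L₁ ih =>
    obtain ⟨q, hq, rfl | rfl⟩ := mem_splits_cons.1 hp <;>
    obtain ⟨q₁, hq₁, q₂, hq₂, rfl⟩ := ih hq
    · exact ⟨(v :: q₁.1, q₁.2), mem_splits_cons.2 ⟨q₁, hq₁, .inl rfl⟩, q₂, hq₂, rfl⟩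
    · exact ⟨(q₁.1, v :: q₁.2), mem_splits_cons.2 ⟨q₁, hq₁, .inr rfl⟩, q₂, hq₂, rfl⟩

theorem exists_of_mem_splits_map (f : α → β) {L : List α} {p : List β × List β}
    (hp : p ∈ splits (L.map f)) : ∃ q ∈ splits L, p = (q.1.map f, q.2.map f) := by
  induction L generalizing p with
  | nil => exact ⟨([], []), by simp [splits], by simpa [splits] using hp⟩
  | cons v L ih =>
    obtain ⟨q, hq, rfl | rfl⟩ := mem_splits_cons.1 hp <;> obtain ⟨r, hr, rfl⟩ := ih hq
    · exact ⟨(v :: r.1, r.2), mem_splits_cons.2 ⟨r, hr, .inl rfl⟩, rfl⟩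
    · exact ⟨(r.1, v :: r.2), mem_splits_cons.2 ⟨r, hr, .inr rfl⟩, rfl⟩

theorem exists_of_mem_splits_replicate {v : α} {j : ℕ} {p : List α × List α}
    (hp : p ∈ splits (replicate j v)) :
    ∃ j₁ j₂, j₁ + j₂ = j ∧ p = (replicate j₁ v, replicate j₂ v) := by
  induction j generalizing p with
  | zero => exact ⟨0, 0, rfl, by simpa [splits] using hp⟩
  | succ j ih =>
    obtain ⟨q, hq, rfl | rfl⟩ := mem_splits_cons.1 hp <;> obtain ⟨j₁, j₂, rfl, rfl⟩ := ih hq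
    · exact ⟨j₁ + 1, j₂, by omega, rfl⟩
    · exact ⟨j₁, j₂ + 1, by omega, rfl⟩

theorem sum_map_splits_cons {M : Type*} [AddCommMonoid M] (F : List α × List α → M)
    (v : α) (L : List α) :
    ((splits (v :: L)).map F).sum
      = ((splits L).map fun p => F (v :: p.1, p.2) + F (p.1, v :: p.2)).sum := by
  simp only [splits]
  induction splits L with
  | nil => simp
  | cons q l ih => simp [ih, add_assoc]

end List

section Leibniz

variable {E F : Type*} [NormedAddCommGroup E] [NormedSpace ℝ E]
  [NormedAddCommGroup F] [NormedSpace ℝ F]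

theorem contDiff_dLine {f : E → F} (hf : ContDiff ℝ (⊤ : ℕ∞) f) (L : List E) :
    ContDiff ℝ (⊤ : ℕ∞) (dLine L f) := by
  induction L with
  | nil => exact hf
  | cons v L ih => exact (ih.fderiv_right (by simp)).clm_apply contDiff_const

theorem HasFDerivAt.list_sum {ι : Type*} {l : List ι} {A : ι → E → F}
    {A' : ι → E →L[ℝ] F} {x : E} (h : ∀ i ∈ l, HasFDerivAt (A i) (A' i) x) :
    HasFDerivAt (fun y => (l.map (A · y)).sum) (l.map A').sum x := by
  induction l with
  | nil => simpa using hasFDerivAt_const (0 : F) x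
  | cons i l ih => simpa using (h i (by simp)).fun_add (ih fun j hj => h j (by simp [hj]))

theorem dLine_mul {f g : E → ℂ} (hf : ContDiff ℝ (⊤ : ℕ∞) f) (hg : ContDiff ℝ (⊤ : ℕ∞) g)
    (L : List E) :
    dLine L (fun y => f y * g y)
      = fun x => (L.splits.map fun p => dLine p.1 f x * dLine p.2 g x).sum := by
  induction L with
  | nil => funext x; simp [List.splits, dLine]
  | cons v L ih =>
    funext x
    have hD : ∀ p ∈ L.splits, HasFDerivAt (fun y => dLine p.1 f y * dLine p.2 g y)
        (dLine p.1 f x • fderiv ℝ (dLine p.2 g) x + dLine p.2 g x • fderiv ℝ (dLine p.1 f) x)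
        x := fun p _ =>
      ((contDiff_dLine hf p.1).differentiable (by simp) x).hasFDerivAt.fun_mul
        ((contDiff_dLine hg p.2).differentiable (by simp) x).hasFDerivAt
    change fderiv ℝ (dLine L fun y => f y * g y) x v = _
    rw [ih, (HasFDerivAt.list_sum hD).fderiv, List.sum_map_splits_cons,
      ← ContinuousLinearMap.apply_apply v, map_list_sum, List.map_map]
    congr 1
    refine List.map_congr_left fun p _ => ?_
    simp only [Function.comp_apply, ContinuousLinearMap.apply_apply,
      add_apply, smul_apply, smul_eq_mul, dLine]
    ring

end Leibniz

theorem Asymptotics.IsBigO.list_sum {α ι E F : Type*} [NormedAddCommGroup E] [Norm F]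
    {f : Filter α} {l : List ι} {A : ι → α → E} {g : α → F} (h : ∀ i ∈ l, A i =O[f] g) :
    (fun x => (l.map (A · x)).sum) =O[f] g := by
  induction l with
  | nil => simpa using isBigO_zero g f
  | cons i l ih => simpa using (h i (by simp)).add (ih fun j hj => h j (by simp [hj]))

theorem Real.rpow_add_le_rpow_mul_rpow {J K : ℝ} (hJ : 0 < J) (hJK : J ≤ K) (a : ℝ) {r : ℝ}
    (hr : 0 ≤ r) : J ^ (a + r) ≤ J ^ a * K ^ r := by
  rw [Real.rpow_add hJ]
  gcongr

theorem Real.rpow_add_rpow_mul_rpow_add_rpow_le {J K s₁ s₂ b : ℝ} (hJ : 0 < J) (hJK : J ≤ K)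
    (h₁ : b ≤ s₁) (h₂ : b ≤ s₂) (h₁₂ : b ≤ s₁ + s₂) :
    (J ^ s₁ + K ^ s₁) * (J ^ s₂ + K ^ s₂) ≤ 4 * ((J ^ b + K ^ b) * K ^ (s₁ + s₂ - b)) := by
  have hK : 0 < K := hJ.trans_le hJK
  have hJJ : J ^ s₁ * J ^ s₂ ≤ J ^ b * K ^ (s₁ + s₂ - b) := by
    rw [← Real.rpow_add hJ]
    convert Real.rpow_add_le_rpow_mul_rpow hJ hJK b (sub_nonneg.2 h₁₂) using 2
    ring
  have hJK' : J ^ s₁ * K ^ s₂ ≤ J ^ b * K ^ (s₁ + s₂ - b) :=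
    calc J ^ s₁ * K ^ s₂ = J ^ (b + (s₁ - b)) * K ^ s₂ := by ring_nf
      _ ≤ J ^ b * K ^ (s₁ - b) * K ^ s₂ := by
        gcongr; exact Real.rpow_add_le_rpow_mul_rpow hJ hJK b (sub_nonneg.2 h₁)
      _ = J ^ b * K ^ (s₁ + s₂ - b) := by rw [mul_assoc, ← Real.rpow_add hK]; ring_nf
  have hKJ : K ^ s₁ * J ^ s₂ ≤ J ^ b * K ^ (s₁ + s₂ - b) :=
    calc K ^ s₁ * J ^ s₂ = J ^ (b + (s₂ - b)) * K ^ s₁ := by ring_nf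
      _ ≤ J ^ b * K ^ (s₂ - b) * K ^ s₁ := by
        gcongr; exact Real.rpow_add_le_rpow_mul_rpow hJ hJK b (sub_nonneg.2 h₂)
      _ = J ^ b * K ^ (s₁ + s₂ - b) := by rw [mul_assoc, ← Real.rpow_add hK]; ring_nf
  have hKK : K ^ s₁ * K ^ s₂ = K ^ b * K ^ (s₁ + s₂ - b) := by
    rw [← Real.rpow_add hK, ← Real.rpow_add hK]; ring_nf
  have hJc : 0 ≤ J ^ b * K ^ (s₁ + s₂ - b) := by positivity
  have hKc : 0 ≤ K ^ b * K ^ (s₁ + s₂ - b) := by positivity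
  linarith

section AnisoSymbol

open Asymptotics

variable {n : ℕ}

theorem jap_pos (ξ : EuclideanSpace ℝ (Fin n)) : 0 < jap ξ :=
  Real.rpow_pos_of_pos (by positivity) _

theorem jap_le_kap {d : ℝ} (hd : 0 < d) (ξ : EuclideanSpace ℝ (Fin n)) (τ : ℝ) :
    jap ξ ≤ kap d ξ τ := by
  calc jap ξ = (jap ξ ^ (2 * d)) ^ (1 / (2 * d)) := by
        rw [← Real.rpow_mul (jap_pos ξ).le, mul_one_div_cancel (by positivity), Real.rpow_one]
    _ ≤ kap d ξ τ :=
      Real.rpow_le_rpow (Real.rpow_nonneg (jap_pos ξ).le _)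
        (le_add_of_nonneg_right (sq_nonneg τ)) (by positivity)

noncomputable def derivDirs (n : ℕ) (B A : List (Fin n)) (j : ℕ) :
    List (EuclideanSpace ℝ (Fin n) × EuclideanSpace ℝ (Fin n) × ℝ) :=
  B.map (fun i => (EuclideanSpace.single i 1, 0, 0))
    ++ A.map (fun i => (0, EuclideanSpace.single i 1, 0)) ++ List.replicate j (0, 0, 1)

noncomputable def anisoWeight (d m ν k j : ℝ)
    (q : EuclideanSpace ℝ (Fin n) × EuclideanSpace ℝ (Fin n) × ℝ) : ℝ :=
  (jap q.2.1 ^ (ν - k) + kap d q.2.1 q.2.2 ^ (ν - k)) * kap d q.2.1 q.2.2 ^ (m - ν - d * j)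

theorem anisoWeight_nonneg (d m ν k j : ℝ)
    (q : EuclideanSpace ℝ (Fin n) × EuclideanSpace ℝ (Fin n) × ℝ) :
    0 ≤ anisoWeight d m ν k j q := by
  have := jap_pos q.2.1
  unfold anisoWeight kap
  positivity

theorem isAnisoSymbol_iff_isBigO {d m ν : ℝ}
    {h : EuclideanSpace ℝ (Fin n) × EuclideanSpace ℝ (Fin n) × ℝ → ℂ} :
    IsAnisoSymbol n d m ν h ↔ ContDiff ℝ (⊤ : ℕ∞) h ∧
      ∀ B A j, dLine (derivDirs n B A j) h =O[⊤] anisoWeight d m ν A.length j := by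
  simp only [isBigO_top, Real.norm_of_nonneg (anisoWeight_nonneg _ _ _ _ _ _), Prod.forall]
  rfl

theorem exists_of_mem_splits_derivDirs {B A : List (Fin n)} {j : ℕ}
    {p : List (EuclideanSpace ℝ (Fin n) × EuclideanSpace ℝ (Fin n) × ℝ) ×
      List (EuclideanSpace ℝ (Fin n) × EuclideanSpace ℝ (Fin n) × ℝ)}
    (hp : p ∈ (derivDirs n B A j).splits) :
    ∃ B₁ B₂ A₁ A₂ j₁ j₂, A₁.length + A₂.length = A.length ∧ j₁ + j₂ = j ∧
      p = (derivDirs n B₁ A₁ j₁, derivDirs n B₂ A₂ j₂) := by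
  obtain ⟨q, hq, r, hr, rfl⟩ := List.exists_of_mem_splits_append hp
  obtain ⟨t, ht, s, hs, rfl⟩ := List.exists_of_mem_splits_append hq
  obtain ⟨B', -, rfl⟩ := List.exists_of_mem_splits_map _ ht
  obtain ⟨A', hA', rfl⟩ := List.exists_of_mem_splits_map _ hs
  obtain ⟨j₁, j₂, hj, rfl⟩ := List.exists_of_mem_splits_replicate hr
  exact ⟨B'.1, B'.2, A'.1, A'.2, j₁, j₂, List.length_add_length_of_mem_splits hA', hj, rfl⟩

theorem anisoWeight_mul_le {d : ℝ} (hd : 0 < d) {m m' ν ν' k₁ k₂ : ℝ} (hk₁ : 0 ≤ k₁)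
    (hk₂ : 0 ≤ k₂) (j₁ j₂ : ℝ) (q : EuclideanSpace ℝ (Fin n) × EuclideanSpace ℝ (Fin n) × ℝ) :
    anisoWeight d m ν k₁ j₁ q * anisoWeight d m' ν' k₂ j₂ q
      ≤ 4 * anisoWeight d (m + m') (min (min ν ν') (ν + ν')) (k₁ + k₂) (j₁ + j₂) q := by
  set ν'' := min (min ν ν') (ν + ν')
  have hν : ν'' ≤ ν := (min_le_left _ _).trans (min_le_left _ _)
  have hν' : ν'' ≤ ν' := (min_le_left _ _).trans (min_le_right _ _)
  have hνν' : ν'' ≤ ν + ν' := min_le_right _ _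
  obtain ⟨-, ξ, τ⟩ := q
  have hJ := jap_pos ξ
  have hJK := jap_le_kap hd ξ τ
  have hK := hJ.trans_le hJK
  unfold anisoWeight
  dsimp only
  set J := jap ξ
  set K := kap d ξ τ
  have hweight : (J ^ (ν - k₁) + K ^ (ν - k₁)) * (J ^ (ν' - k₂) + K ^ (ν' - k₂))
      ≤ 4 * ((J ^ (ν'' - (k₁ + k₂)) + K ^ (ν'' - (k₁ + k₂))) * K ^ (ν + ν' - ν'')) := by
    convert Real.rpow_add_rpow_mul_rpow_add_rpow_le hJ hJK
      (by linarith : ν'' - (k₁ + k₂) ≤ ν - k₁) (by linarith : ν'' - (k₁ + k₂) ≤ ν' - k₂)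
      (by linarith) using 4
    ring
  calc _ = (J ^ (ν - k₁) + K ^ (ν - k₁)) * (J ^ (ν' - k₂) + K ^ (ν' - k₂))
        * K ^ (m - ν - d * j₁ + (m' - ν' - d * j₂)) := by
        rw [Real.rpow_add hK]; ring
    _ ≤ 4 * ((J ^ (ν'' - (k₁ + k₂)) + K ^ (ν'' - (k₁ + k₂))) * K ^ (ν + ν' - ν''))
        * K ^ (m - ν - d * j₁ + (m' - ν' - d * j₂)) := by gcongr
    _ = _ := by
        rw [mul_assoc, mul_assoc, ← Real.rpow_add hK]
        ring_nf

end AnisoSymbol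

/-- The pointwise product of an anisotropic symbol of order/regularity `(m,ν)` with one of
order/regularity `(m',ν')` is an anisotropic symbol of order `m'' = m + m'` and regularity
number `ν'' = min{ν, ν', ν + ν'}`. -/
theorem stmt_4 {n : ℕ} (d m m' ν ν' : ℝ) (hd : 0 < d)
    (h h' : EuclideanSpace ℝ (Fin n) × EuclideanSpace ℝ (Fin n) × ℝ → ℂ)
    (hh : IsAnisoSymbol n d m ν h) (hh' : IsAnisoSymbol n d m' ν' h') :
    IsAnisoSymbol n d (m + m') (min (min ν ν') (ν + ν')) (fun q => h q * h' q) := by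
  rw [isAnisoSymbol_iff_isBigO] at hh hh' ⊢
  obtain ⟨hsmooth, hbound⟩ := hh
  obtain ⟨hsmooth', hbound'⟩ := hh'
  refine ⟨hsmooth.mul hsmooth', fun B A j => ?_⟩
  rw [dLine_mul hsmooth hsmooth']
  refine Asymptotics.IsBigO.list_sum fun p hp => ?_
  obtain ⟨B₁, B₂, A₁, A₂, j₁, j₂, hA, rfl, rfl⟩ := exists_of_mem_splits_derivDirs hp
  refine ((hbound B₁ A₁ j₁).mul (hbound' B₂ A₂ j₂)).trans
    (Asymptotics.isBigO_of_le' (c := 4) ⊤ fun q => ?_)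
  rw [Real.norm_of_nonneg (mul_nonneg (anisoWeight_nonneg ..) (anisoWeight_nonneg ..)),
    Real.norm_of_nonneg (anisoWeight_nonneg ..), ← hA]
  push_cast
  exact anisoWeight_mul_le hd (Nat.cast_nonneg _) (Nat.cast_nonneg _) _ _ q
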